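/- arXiv:2412.02781 — 6 statements merged into one kernel-verified Lean document; each statement's English description precedes it below -/
import Mathlib

section
/- If a differentiable function f: ℝ^d → ℝ satisfies the asymmetric (L₀,L₁)-smoothness condition ‖∇f(x) − ∇f(y)‖ ≤ (L₀ + L₁‖∇f(x)‖)‖x − y‖ for all x, y, then for all x, y: f(y) ≤ f(x) + ⟨∇f(x), y − x⟩ + ((L₀ + L₁‖∇f(x)‖)/2)‖x − y‖². -/
/-!
For fixed `x`, asymmetric smoothness says that `∇f` is Lipschitz *at the point `x`* with constant
`L = L₀ + L₁‖∇f x‖`, and this one-point condition already gives the descent lemma: along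
`x + t (y - x)` the derivative of `f` exceeds `⟪∇f x, y - x⟫` by at most `L t ‖y - x‖²`, so
`t ↦ f (x + t (y - x)) - t ⟪∇f x, y - x⟫ - L t² ‖y - x‖² / 2` is antitone on `[0, 1]`.
-/

open RealInnerProductSpace Set

section

variable {E : Type*} [NormedAddCommGroup E] [InnerProductSpace ℝ E] [CompleteSpace E]
  {f : E → ℝ}

theorem DifferentiableAt.hasDerivAt_comp_add_smul {x v : E} {t : ℝ}
    (hf : DifferentiableAt ℝ f (x + t • v)) :
    HasDerivAt (fun s : ℝ => f (x + s • v)) ⟪gradient f (x + t • v), v⟫ t := by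
  have hline : HasDerivAt (fun s : ℝ => x + s • v) v t := by
    simpa using ((hasDerivAt_id t).smul_const v).const_add x
  rw [inner_gradient_left]
  exact hf.hasFDerivAt.comp_hasDerivAt t hline

theorem le_add_inner_gradient_add_of_norm_gradient_sub_le (hf : Differentiable ℝ f) {x : E}
    {L : ℝ} (hL : ∀ z, ‖gradient f x - gradient f z‖ ≤ L * ‖x - z‖) (y : E) :
    f y ≤ f x + ⟪gradient f x, y - x⟫ + L / 2 * ‖x - y‖ ^ 2 := by
  set v := y - x
  set g := gradient f x
  let ψ : ℝ → ℝ := fun t => f (x + t • v) - t * ⟪g, v⟫ - L / 2 * t ^ 2 * ‖v‖ ^ 2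
  have hψ' : ∀ t, HasDerivAt ψ (⟪gradient f (x + t • v), v⟫ - ⟪g, v⟫ - L * t * ‖v‖ ^ 2) t := by
    intro t
    have hquad : HasDerivAt (fun s : ℝ => L / 2 * s ^ 2 * ‖v‖ ^ 2) (L * t * ‖v‖ ^ 2) t :=
      (((hasDerivAt_pow 2 t).const_mul (L / 2)).mul_const (‖v‖ ^ 2)).congr_deriv
        (by push_cast; ring)
    exact (((hf _).hasDerivAt_comp_add_smul).sub
      ((hasDerivAt_id t).mul_const _ |>.congr_deriv (one_mul _))).sub hquad
  have hψ'_nonpos : ∀ t ∈ interior (Icc (0 : ℝ) 1), deriv ψ t ≤ 0 := by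
    intro t ht
    rw [interior_Icc] at ht
    rw [(hψ' t).deriv, sub_nonpos, ← inner_sub_left]
    calc ⟪gradient f (x + t • v) - g, v⟫
        ≤ ‖g - gradient f (x + t • v)‖ * ‖v‖ := by
          rw [norm_sub_rev]; exact real_inner_le_norm _ _
      _ ≤ L * ‖x - (x + t • v)‖ * ‖v‖ := by gcongr; exact hL _
      _ = L * t * ‖v‖ ^ 2 := by
          rw [sub_add_cancel_left, norm_neg, norm_smul, Real.norm_of_nonneg ht.1.le]; ring
  have hψ_anti : AntitoneOn ψ (Icc 0 1) :=
    antitoneOn_of_deriv_nonpos (convex_Icc 0 1)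
      (fun t _ => (hψ' t).continuousAt.continuousWithinAt)
      (fun t _ => (hψ' t).differentiableAt.differentiableWithinAt) hψ'_nonpos
  have h10 : ψ 1 ≤ ψ 0 := hψ_anti (by norm_num) (by norm_num) zero_le_one
  have hxv : x + v = y := add_sub_cancel x y
  simp only [ψ, one_smul, zero_smul, add_zero, hxv] at h10
  rw [norm_sub_rev x y]
  linarith

end

theorem stmt_0_general {d : ℕ} (f : EuclideanSpace ℝ (Fin d) → ℝ) (L0 L1 : ℝ)
    (hdiff : Differentiable ℝ f)
    (hsmooth : ∀ x y, ‖gradient f x - gradient f y‖ ≤ (L0 + L1 * ‖gradient f x‖) * ‖x - y‖) :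
    ∀ x y, f y ≤ f x + ⟪gradient f x, y - x⟫
      + (L0 + L1 * ‖gradient f x‖) / 2 * ‖x - y‖ ^ 2 :=
  fun x => le_add_inner_gradient_add_of_norm_gradient_sub_le hdiff (hsmooth x)

theorem stmt_0 {d : ℕ} (f : EuclideanSpace ℝ (Fin d) → ℝ) (L0 L1 : ℝ)
    (hL0 : 0 ≤ L0) (hL1 : 0 ≤ L1) (hdiff : Differentiable ℝ f)
    (hsmooth : ∀ x y, ‖gradient f x - gradient f y‖ ≤ (L0 + L1 * ‖gradient f x‖) * ‖x - y‖) :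
    ∀ x y, f y ≤ f x + ⟪gradient f x, y - x⟫
      + (L0 + L1 * ‖gradient f x‖) / 2 * ‖x - y‖ ^ 2 :=
  stmt_0_general f L0 L1 hdiff hsmooth
end

section
/- If a differentiable f: ℝ^d → ℝ satisfies the descent inequality f(y) ≤ f(x) + ⟨∇f(x), y − x⟩ + ((L₀ + L₁‖∇f(x)‖)/2)‖x − y‖² for all x, y, and f is bounded below by f⋆, then for all x: ‖∇f(x)‖²/(2(L₀ + L₁‖∇f(x)‖)) ≤ f(x) − f⋆. -/
/-! The quadratic upper model `f x + ⟪g, y - x⟫ + L/2 ‖x - y‖²` is minimised at the gradient step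
`y = x - L⁻¹ • g`, where it equals `f x - ‖g‖² / (2L)`. Hence one gradient step with step size
`1 / (L₀ + L₁‖∇f(x)‖)` lowers `f` by at least `‖∇f(x)‖² / (2(L₀ + L₁‖∇f(x)‖))`, and `f` cannot
drop below `f⋆`. -/

open RealInnerProductSpace

section DescentStep

variable {E : Type*} [NormedAddCommGroup E] [InnerProductSpace ℝ E]

theorem inner_add_half_mul_norm_sq_gradientStep (g : E) (L : ℝ) :
    ⟪g, -(L⁻¹ • g)⟫ + L / 2 * ‖L⁻¹ • g‖ ^ 2 = -(‖g‖ ^ 2 / (2 * L)) := by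
  rw [inner_neg_right, real_inner_smul_right, real_inner_self_eq_norm_sq, norm_smul, mul_pow,
    Real.norm_eq_abs, sq_abs]
  rcases eq_or_ne L 0 with rfl | hL
  · simp
  · field_simp
    ring

theorem le_sub_norm_sq_div_of_descent {f : E → ℝ} {x g : E} {L : ℝ}
    (hdesc : ∀ y, f y ≤ f x + ⟪g, y - x⟫ + L / 2 * ‖x - y‖ ^ 2) :
    f (x - L⁻¹ • g) ≤ f x - ‖g‖ ^ 2 / (2 * L) := by
  have h := hdesc (x - L⁻¹ • g)
  rwa [sub_sub_cancel_left, sub_sub_cancel, add_assoc, inner_add_half_mul_norm_sq_gradientStep,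
    ← sub_eq_add_neg] at h

end DescentStep

theorem stmt_1_general {d : ℕ} (f : EuclideanSpace ℝ (Fin d) → ℝ) (L0 L1 fstar : ℝ)
    (hdesc : ∀ x y, f y ≤ f x + ⟪gradient f x, y - x⟫
      + (L0 + L1 * ‖gradient f x‖) / 2 * ‖x - y‖ ^ 2)
    (hlow : ∀ x, fstar ≤ f x) :
    ∀ x, ‖gradient f x‖ ^ 2 / (2 * (L0 + L1 * ‖gradient f x‖)) ≤ f x - fstar := by
  intro x
  have hstep := le_sub_norm_sq_div_of_descent (hdesc x)
  linarith [hlow (x - (L0 + L1 * ‖gradient f x‖)⁻¹ • gradient f x)]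

theorem stmt_1 {d : ℕ} (f : EuclideanSpace ℝ (Fin d) → ℝ) (L0 L1 fstar : ℝ)
    (hL0 : 0 ≤ L0) (hL1 : 0 ≤ L1) (hdiff : Differentiable ℝ f)
    (hpos : ∀ x, 0 < L0 + L1 * ‖gradient f x‖)
    (hdesc : ∀ x y, f y ≤ f x + ⟪gradient f x, y - x⟫
      + (L0 + L1 * ‖gradient f x‖) / 2 * ‖x - y‖ ^ 2)
    (hlow : ∀ x, fstar ≤ f x) :
    ∀ x, ‖gradient f x‖ ^ 2 / (2 * (L0 + L1 * ‖gradient f x‖)) ≤ f x - fstar :=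
  stmt_1_general f L0 L1 fstar hdesc hlow
end

section
/- If a differentiable f: ℝ^d → ℝ satisfies f(y) − f(x) ≤ ⟨∇f(x), y − x⟩ + ((L₀ + L₁‖∇f(x)‖)/2)·exp(L₁‖x − y‖)·‖x − y‖² for all x, y, f is bounded below by f⋆, and η > 0 satisfies η·exp(η) ≤ 1, then for all x: η‖∇f(x)‖²/(2(L₀ + L₁‖∇f(x)‖)) ≤ f(x) − f⋆. -/
/-!
Take one normalized gradient step `y = x - (η / L) ∇f(x)` with `L = L₀ + L₁‖∇f(x)‖`. Since
`L₁‖x - y‖ ≤ η`, the exponential factor in the descent inequality is at most `e^η`, and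
`η e^η ≤ 1` makes the quadratic term at most half of the linear decrease `η‖∇f(x)‖² / L`.
Hence `f⋆ ≤ f y ≤ f x - η‖∇f(x)‖² / (2L)`.
-/

open RealInnerProductSpace

lemma normalized_step_quadratic_term_le {L L1 N η : ℝ} (hL : 0 < L)
    (hL1N : L1 * N ≤ L) (hη : 0 ≤ η) (hηe : η * Real.exp η ≤ 1) :
    L / 2 * Real.exp (L1 * (η / L * N)) * (η / L * N) ^ 2 ≤ η * N ^ 2 / (2 * L) := by
  have hexponent : L1 * (η / L * N) ≤ η := by
    calc L1 * (η / L * N) = η * (L1 * N) / L := by ring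
      _ ≤ η * L / L := by gcongr
      _ = η := by field_simp
  have hfactor : η * Real.exp (L1 * (η / L * N)) ≤ 1 :=
    le_trans (by gcongr) hηe
  calc L / 2 * Real.exp (L1 * (η / L * N)) * (η / L * N) ^ 2
      = η * Real.exp (L1 * (η / L * N)) * (η * N ^ 2 / (2 * L)) := by field_simp
    _ ≤ 1 * (η * N ^ 2 / (2 * L)) := by gcongr
    _ = η * N ^ 2 / (2 * L) := one_mul _

variable {E : Type*} [NormedAddCommGroup E] [InnerProductSpace ℝ E]

lemma le_sub_of_normalized_step {f : E → ℝ} {g x : E} {L L1 η : ℝ} (hL : 0 < L)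
    (hL1g : L1 * ‖g‖ ≤ L) (hη : 0 ≤ η) (hηe : η * Real.exp η ≤ 1)
    (hdesc : f (x - (η / L) • g) - f x ≤ ⟪g, (x - (η / L) • g) - x⟫
      + L / 2 * Real.exp (L1 * ‖x - (x - (η / L) • g)‖) * ‖x - (x - (η / L) • g)‖ ^ 2) :
    f (x - (η / L) • g) ≤ f x - η * ‖g‖ ^ 2 / (2 * L) := by
  have hc : 0 ≤ η / L := by positivity
  have hstep : ‖x - (x - (η / L) • g)‖ = η / L * ‖g‖ := by
    rw [sub_sub_cancel, norm_smul, Real.norm_of_nonneg hc]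
  have hinner : ⟪g, (x - (η / L) • g) - x⟫ = -(2 * (η * ‖g‖ ^ 2 / (2 * L))) := by
    rw [sub_sub_cancel_left, inner_neg_right, real_inner_smul_right,
      real_inner_self_eq_norm_sq]
    field_simp
  rw [hinner, hstep] at hdesc
  linarith [normalized_step_quadratic_term_le hL hL1g hη hηe]

theorem stmt_2_general {d : ℕ} (f : EuclideanSpace ℝ (Fin d) → ℝ) (L0 L1 fstar η : ℝ)
    (hL0 : 0 < L0) (hL1 : 0 ≤ L1)
    (hη : 0 < η) (hηe : η * Real.exp η ≤ 1)
    (hdesc : ∀ x y, f y - f x ≤ ⟪gradient f x, y - x⟫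
      + (L0 + L1 * ‖gradient f x‖) / 2 * Real.exp (L1 * ‖x - y‖) * ‖x - y‖ ^ 2)
    (hlow : ∀ x, fstar ≤ f x) :
    ∀ x, η * ‖gradient f x‖ ^ 2 / (2 * (L0 + L1 * ‖gradient f x‖)) ≤ f x - fstar := by
  intro x
  have hL : 0 < L0 + L1 * ‖gradient f x‖ := by positivity
  have hdecrease := le_sub_of_normalized_step hL (le_add_of_nonneg_left hL0.le) hη.le hηe
    (hdesc x _)
  linarith [hlow (x - (η / (L0 + L1 * ‖gradient f x‖)) • gradient f x)]

theorem stmt_2 {d : ℕ} (f : EuclideanSpace ℝ (Fin d) → ℝ) (L0 L1 fstar η : ℝ)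
    (hL0 : 0 < L0) (hL1 : 0 ≤ L1) (hdiff : Differentiable ℝ f)
    (hη : 0 < η) (hηe : η * Real.exp η ≤ 1)
    (hdesc : ∀ x y, f y - f x ≤ ⟪gradient f x, y - x⟫
      + (L0 + L1 * ‖gradient f x‖) / 2 * Real.exp (L1 * ‖x - y‖) * ‖x - y‖ ^ 2)
    (hlow : ∀ x, fstar ≤ f x) :
    ∀ x, η * ‖gradient f x‖ ^ 2 / (2 * (L0 + L1 * ‖gradient f x‖)) ≤ f x - fstar :=
  stmt_2_general f L0 L1 fstar η hL0 hL1 hη hηe hdesc hlow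
end

section
/- Let (δ_t)_{t=0}^{T} be nonnegative reals satisfying r_t ≤ δ_t − δ_{t+1} + c·(δ_t + Δ) for all t < T, where r_t ≥ 0, c ≥ 0, Δ ≥ 0. If c ≤ 1/T, then min_{0≤t<T} r_t ≤ ((1+c)^T / T)·δ₀ + c·Δ·(extra factor bounded by the same expression), specifically min_{0≤t<T} r_t ≤ ((1+c)^T/T)·δ₀ + c·Δ·(1+c)^T ≤ (e/T)·δ₀ + e·c·Δ. -/
/-!
Dividing the recursion at step `t` by `(1 + c) ^ (t + 1)` makes the `δ`-terms telescope, so a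
weighted average of the `r t`, with weights `(1 + c) ^ -(t + 1)` of total mass at least
`T / (1 + c) ^ T`, is bounded by `δ 0` plus `c * Δ` per unit of mass. The minimum of the `r t`
is below that average.
-/

open Finset

lemma sub_mul_sum_inv_pow_le_of_le_mul_sub {a m b : ℝ} {δ : ℕ → ℝ} {T : ℕ} (ha : 0 < a)
    (h : ∀ t < T, m ≤ a * δ t - δ (t + 1) + b) :
    (m - b) * ∑ t ∈ range T, (a ^ (t + 1))⁻¹ ≤ δ 0 - δ T / a ^ T := by
  have hstep : ∀ t < T, (m - b) * (a ^ (t + 1))⁻¹ ≤ δ t / a ^ t - δ (t + 1) / a ^ (t + 1) := by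
    intro t ht
    have hsplit : δ t / a ^ t - δ (t + 1) / a ^ (t + 1) = (a * δ t - δ (t + 1)) / a ^ (t + 1) := by
      field_simp
      ring
    rw [← div_eq_mul_inv, hsplit]
    exact div_le_div_of_nonneg_right (by linarith [h t ht]) (pow_pos ha _).le
  calc (m - b) * ∑ t ∈ range T, (a ^ (t + 1))⁻¹
      = ∑ t ∈ range T, (m - b) * (a ^ (t + 1))⁻¹ := mul_sum _ _ _
    _ ≤ ∑ t ∈ range T, (δ t / a ^ t - δ (t + 1) / a ^ (t + 1)) :=
        sum_le_sum fun t ht => hstep t (mem_range.mp ht)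
    _ = δ 0 - δ T / a ^ T := by rw [sum_range_sub' (fun t => δ t / a ^ t)]; simp

lemma div_pow_le_sum_inv_pow {a : ℝ} (ha : 1 ≤ a) (T : ℕ) :
    T / a ^ T ≤ ∑ t ∈ range T, (a ^ (t + 1))⁻¹ := by
  calc (T : ℝ) / a ^ T = ∑ _t ∈ range T, (a ^ T)⁻¹ := by simp [div_eq_mul_inv]
    _ ≤ ∑ t ∈ range T, (a ^ (t + 1))⁻¹ := sum_le_sum fun t ht =>
        inv_anti₀ (pow_pos (by linarith) _) (pow_le_pow_right₀ ha (mem_range.mp ht))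

theorem stmt_5_general (T : ℕ) (hT : 0 < T) (δ r : ℕ → ℝ) (c Δ : ℝ)
    (hδ : ∀ t ≤ T, 0 ≤ δ t)
    (hc0 : 0 ≤ c) (hΔ : 0 ≤ Δ)
    (hrec : ∀ t < T, r t ≤ δ t - δ (t + 1) + c * (δ t + Δ)) :
    ∃ t < T, r t ≤ (1 + c) ^ T / T * δ 0 + c * Δ * (1 + c) ^ T := by
  obtain ⟨t₀, ht₀, hmin⟩ := exists_min_image (range T) r ⟨0, mem_range.mpr hT⟩
  refine ⟨t₀, mem_range.mp ht₀, ?_⟩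
  have ha : 1 ≤ 1 + c := by linarith
  have hpow : 0 < (1 + c) ^ T := pow_pos (by linarith) T
  set S := ∑ t ∈ range T, ((1 + c) ^ (t + 1))⁻¹
  have hS : T / (1 + c) ^ T ≤ S := div_pow_le_sum_inv_pow ha T
  have hS0 : 0 < (T : ℝ) / (1 + c) ^ T := div_pos (Nat.cast_pos.mpr hT) hpow
  have havg : (r t₀ - c * Δ) * S ≤ δ 0 := by
    have hstep : ∀ t < T, r t₀ ≤ (1 + c) * δ t - δ (t + 1) + c * Δ := fun t ht =>
      (hmin t (mem_range.mpr ht)).trans (by linarith [hrec t ht])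
    have htelescope := sub_mul_sum_inv_pow_le_of_le_mul_sub (by linarith) hstep
    linarith [htelescope, div_nonneg (hδ T le_rfl) hpow.le]
  have hr₀ : r t₀ - c * Δ ≤ δ 0 / (T / (1 + c) ^ T) :=
    (le_div_iff₀ (hS0.trans_le hS)).mpr havg |>.trans
      (div_le_div_of_nonneg_left (hδ 0 (Nat.zero_le T)) hS0 hS)
  have hcΔ : c * Δ ≤ c * Δ * (1 + c) ^ T :=
    le_mul_of_one_le_right (mul_nonneg hc0 hΔ) (one_le_pow₀ ha)
  have hrhs : δ 0 / (T / (1 + c) ^ T) = (1 + c) ^ T / T * δ 0 := by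
    field_simp
  linarith

theorem stmt_5 (T : ℕ) (hT : 0 < T) (δ r : ℕ → ℝ) (c Δ : ℝ)
    (hδ : ∀ t ≤ T, 0 ≤ δ t) (hr : ∀ t < T, 0 ≤ r t)
    (hc0 : 0 ≤ c) (hc : c ≤ 1 / T) (hΔ : 0 ≤ Δ)
    (hrec : ∀ t < T, r t ≤ δ t - δ (t + 1) + c * (δ t + Δ)) :
    ∃ t < T, r t ≤ (1 + c) ^ T / T * δ 0 + c * Δ * (1 + c) ^ T :=
  stmt_5_general T hT δ r c Δ hδ hc0 hΔ hrec
end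

section
/- Suppose f: ℝ^d → ℝ is differentiable, satisfies the descent inequality f(y) ≤ f(x) + ⟨∇f(x), y−x⟩ + ((L₀+L₁‖∇f(x)‖)/2)·exp(L₁‖x−y‖)‖x−y‖², and let α > 0 satisfy α ≤ 1/(2(L₀+L₁‖∇f(x)‖)). Then the gradient step x' = x − α∇f(x) satisfies f(x') ≤ f(x) − α(1 − √3/2)‖∇f(x)‖². -/
/-!
Along `x - α • ∇f x` the descent inequality gives
`f x' ≤ f x - α‖∇f x‖² + (α c e / 2) · α‖∇f x‖²` with `c = L0 + L1‖∇f x‖` and `e = exp (L1 α ‖∇f x‖)`.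
The step-size condition gives `α c ≤ 1/2`, hence also `L1 α ‖∇f x‖ ≤ 1/2` and `e ≤ exp (1/2) ≤ √3`,
so the quadratic term costs at most a `√3/4` fraction of the linear decrease.
-/

open RealInnerProductSpace

namespace Real

theorem exp_half_le_sqrt_three : exp (1 / 2) ≤ √3 := by
  rw [le_sqrt (exp_pos _).le (by norm_num), sq, ← exp_add]
  norm_num
  exact exp_one_lt_d9.le.trans (by norm_num)

end Real

open Real

lemma mul_le_one_div_two_of_le_one_div_two_mul {α c : ℝ} (hα : 0 < α) (h : α ≤ 1 / (2 * c)) :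
    α * c ≤ 1 / 2 := by
  have hc : 0 < c := by
    by_contra! hc
    exact (h.trans (one_div_nonpos.2 (by linarith))).not_gt hα
  rw [le_div_iff₀ (by positivity)] at h
  linarith

lemma step_mul_exp_le_sqrt_three_div_two {L0 L1 α G : ℝ} (hL0 : 0 ≤ L0) (hα : 0 < α)
    (h : α ≤ 1 / (2 * (L0 + L1 * G))) :
    α * (L0 + L1 * G) * exp (L1 * (α * G)) ≤ √3 / 2 := by
  have hαc := mul_le_one_div_two_of_le_one_div_two_mul hα h
  have hexp : exp (L1 * (α * G)) ≤ √3 :=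
    (exp_le_exp.2 (by nlinarith [mul_nonneg hα.le hL0])).trans exp_half_le_sqrt_three
  calc α * (L0 + L1 * G) * exp (L1 * (α * G)) ≤ 1 / 2 * exp (L1 * (α * G)) :=
        mul_le_mul_of_nonneg_right hαc (exp_pos _).le
    _ ≤ 1 / 2 * √3 := by gcongr
    _ = √3 / 2 := by ring

lemma le_of_descent_ineq_sub_smul {E : Type*} [NormedAddCommGroup E] [InnerProductSpace ℝ E]
    {f : E → ℝ} {x g : E} {K L1 α : ℝ} (hα : 0 ≤ α)
    (h : f (x - α • g) ≤ f x + ⟪g, x - α • g - x⟫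
      + K * exp (L1 * ‖x - (x - α • g)‖) * ‖x - (x - α • g)‖ ^ 2) :
    f (x - α • g) ≤ f x - α * ‖g‖ ^ 2 + K * exp (L1 * (α * ‖g‖)) * (α * ‖g‖) ^ 2 := by
  have hinner : ⟪g, x - α • g - x⟫ = -(α * ‖g‖ ^ 2) := by
    rw [sub_sub_cancel_left, inner_neg_right, inner_smul_right, real_inner_self_eq_norm_sq]
  have hnorm : ‖x - (x - α • g)‖ = α * ‖g‖ := by
    rw [sub_sub_cancel, norm_smul, norm_of_nonneg hα]
  rw [hinner, hnorm] at h
  linarith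

theorem stmt_10_general {d : ℕ} (f : EuclideanSpace ℝ (Fin d) → ℝ) (L0 L1 α : ℝ)
    (hL0 : 0 ≤ L0)
    (hdesc : ∀ x y, f y ≤ f x + ⟪gradient f x, y - x⟫
      + (L0 + L1 * ‖gradient f x‖) / 2 * Real.exp (L1 * ‖x - y‖) * ‖x - y‖ ^ 2)
    (x : EuclideanSpace ℝ (Fin d)) (hα : 0 < α)
    (hαsmall : α ≤ 1 / (2 * (L0 + L1 * ‖gradient f x‖))) :
    f (x - α • gradient f x) ≤ f x - α * (1 - Real.sqrt 3 / 2) * ‖gradient f x‖ ^ 2 := by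
  set G := ‖gradient f x‖
  have hstep := le_of_descent_ineq_sub_smul hα.le (hdesc x (x - α • gradient f x))
  have hfactor := step_mul_exp_le_sqrt_three_div_two hL0 hα hαsmall
  calc f (x - α • gradient f x)
      ≤ f x - α * G ^ 2 + (L0 + L1 * G) / 2 * exp (L1 * (α * G)) * (α * G) ^ 2 := hstep
    _ = f x - α * G ^ 2 + α * (L0 + L1 * G) * exp (L1 * (α * G)) / 2 * (α * G ^ 2) := by ring
    _ ≤ f x - α * G ^ 2 + √3 / 2 / 2 * (α * G ^ 2) := by gcongr
    _ ≤ f x - α * (1 - √3 / 2) * G ^ 2 := by nlinarith [sqrt_nonneg 3]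

theorem stmt_10 {d : ℕ} (f : EuclideanSpace ℝ (Fin d) → ℝ) (L0 L1 α : ℝ)
    (hL0 : 0 ≤ L0) (hL1 : 0 ≤ L1) (hdiff : Differentiable ℝ f)
    (hdesc : ∀ x y, f y ≤ f x + ⟪gradient f x, y - x⟫
      + (L0 + L1 * ‖gradient f x‖) / 2 * Real.exp (L1 * ‖x - y‖) * ‖x - y‖ ^ 2)
    (x : EuclideanSpace ℝ (Fin d)) (hα : 0 < α)
    (hαsmall : α ≤ 1 / (2 * (L0 + L1 * ‖gradient f x‖))) :
    f (x - α • gradient f x) ≤ f x - α * (1 - Real.sqrt 3 / 2) * ‖gradient f x‖ ^ 2 :=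
  stmt_10_general f L0 L1 α hL0 hdesc x hα hαsmall
end

section
/- If f: ℝ^d → ℝ is differentiable and satisfies ‖∇f(x) − ∇f(y)‖ ≤ (L₀ + L₁·sup_{u∈[x,y]}‖∇f(u)‖)‖x−y‖ for all x, y (symmetric (L₀,L₁)-smoothness), then f satisfies the asymmetric-style bound with exponential correction: ‖∇f(x) − ∇f(y)‖ ≤ (L₀ + L₁‖∇f(y)‖)·exp(L₁‖x−y‖)·‖x−y‖ for all x, y. -/
/-!
On a segment `[p, q]` of length `h` with `L₁ h < 1` the hypothesis bounds itself: the supremum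
`M` of `‖∇f‖` over `[p, q]` satisfies `M ≤ ‖∇f p‖ + (L₀ + L₁ M) h`, so
`M ≤ (‖∇f p‖ + L₀ h) / (1 - L₁ h)` and hence `‖∇f q - ∇f p‖ ≤ (L₀ + L₁ ‖∇f p‖) h / (1 - L₁ h)`.
Cutting `[y, x]` into `n` such pieces and chaining these one-step bounds gives
`‖∇f x - ∇f y‖ ≤ (L₀ + L₁ ‖∇f y‖) ‖x - y‖ (1 - L₁ ‖x - y‖ / n)⁻ⁿ`, and `(1 - t / n)⁻ⁿ → exp t`.
-/

open Set Filter Topology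

/-- `G` stands for `∇f`. Where `‖G‖` is unbounded on `[x, y]` the `sSup` is the junk value `0`. -/
def SymmetricL0L1Smooth {E F : Type*} [NormedAddCommGroup E] [NormedSpace ℝ E]
    [NormedAddCommGroup F] (L0 L1 : ℝ) (G : E → F) : Prop :=
  ∀ x y, ‖G x - G y‖ ≤ (L0 + L1 * sSup ((fun u => ‖G u‖) '' segment ℝ x y)) * ‖x - y‖

theorem le_nat_mul_mul_pow_of_le_mul_add {a : ℕ → ℝ} {B c : ℝ} (hB : 0 ≤ B) (hc : 1 ≤ c)
    (h0 : a 0 ≤ 0) (hstep : ∀ k, a (k + 1) ≤ c * a k + B * c) (k : ℕ) :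
    a k ≤ k * B * c ^ k := by
  induction k with
  | zero => simpa using h0
  | succ k ih =>
    have hBc : B * c ≤ B * c ^ (k + 1) :=
      mul_le_mul_of_nonneg_left (le_self_pow₀ hc k.succ_ne_zero) hB
    calc a (k + 1) ≤ c * (k * B * c ^ k) + B * c := (hstep k).trans (by gcongr)
      _ = k * B * c ^ (k + 1) + B * c := by ring
      _ ≤ (↑(k + 1) : ℝ) * B * c ^ (k + 1) := by push_cast; linarith

theorem Real.tendsto_inv_one_sub_div_pow_exp (t : ℝ) :
    Tendsto (fun n : ℕ => ((1 - t / n)⁻¹) ^ n) atTop (𝓝 (Real.exp t)) := by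
  have h := (Real.tendsto_one_add_div_pow_exp (-t)).inv₀ (Real.exp_ne_zero _)
  rw [← Real.exp_neg, neg_neg] at h
  refine h.congr fun n => ?_
  rw [inv_pow, neg_div, ← sub_eq_add_neg]

namespace SymmetricL0L1Smooth

variable {E F : Type*} [NormedAddCommGroup E] [NormedSpace ℝ E] [NormedAddCommGroup F]
  {L0 L1 : ℝ} {G : E → F}

theorem sSup_norm_segment_le (hG : SymmetricL0L1Smooth L0 L1 G) (hL0 : 0 ≤ L0) (hL1 : 0 ≤ L1)
    {p q : E} {h : ℝ} (hpq : ‖q - p‖ ≤ h) (hh : L1 * h < 1) :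
    sSup ((fun u => ‖G u‖) '' segment ℝ p q) ≤ (‖G p‖ + L0 * h) / (1 - L1 * h) := by
  have h0 : 0 ≤ h := (norm_nonneg _).trans hpq
  have hden : 0 < 1 - L1 * h := by linarith
  by_cases hbdd : BddAbove ((fun u => ‖G u‖) '' segment ℝ p q)
  · set M := sSup ((fun u => ‖G u‖) '' segment ℝ p q)
    have hM : M ≤ ‖G p‖ + (L0 + L1 * M) * h := by
      refine csSup_le ⟨_, mem_image_of_mem _ (left_mem_segment ℝ p q)⟩ ?_
      rintro _ ⟨v, hv, rfl⟩
      have hsub : segment ℝ v p ⊆ segment ℝ p q := by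
        rw [segment_symm]
        exact (convex_segment p q).segment_subset (left_mem_segment ℝ p q) hv
      have hsup : sSup ((fun u => ‖G u‖) '' segment ℝ v p) ≤ M :=
        csSup_le_csSup hbdd ⟨_, mem_image_of_mem _ (left_mem_segment ℝ v p)⟩ (image_mono hsub)
      have hM0 : 0 ≤ M := (norm_nonneg _).trans (le_csSup hbdd ⟨p, left_mem_segment ℝ p q, rfl⟩)
      calc ‖G v‖ ≤ ‖G p‖ + ‖G v - G p‖ := norm_le_norm_add_norm_sub' _ _
        _ ≤ ‖G p‖ + (L0 + L1 * M) * h := by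
          gcongr
          refine (hG v p).trans (mul_le_mul ?_ ?_ (norm_nonneg _) (by positivity))
          · gcongr
          · exact (norm_sub_le_of_mem_segment hv).trans hpq
    rw [le_div_iff₀ hden]
    linarith
  · rw [Real.sSup_of_not_bddAbove hbdd]
    positivity

theorem norm_sub_le_div (hG : SymmetricL0L1Smooth L0 L1 G) (hL0 : 0 ≤ L0)
    (hL1 : 0 ≤ L1) {p q : E} {h : ℝ} (hpq : ‖q - p‖ ≤ h) (hh : L1 * h < 1) :
    ‖G q - G p‖ ≤ (L0 + L1 * ‖G p‖) * h / (1 - L1 * h) := by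
  have h0 : 0 ≤ h := (norm_nonneg _).trans hpq
  have hden : 0 < 1 - L1 * h := by linarith
  have hsup := hG.sSup_norm_segment_le hL0 hL1 hpq hh
  rw [← segment_symm] at hsup
  calc ‖G q - G p‖ ≤ (L0 + L1 * ((‖G p‖ + L0 * h) / (1 - L1 * h))) * h :=
        (hG q p).trans (mul_le_mul (by gcongr) hpq (norm_nonneg _) (by positivity))
    _ = (L0 + L1 * ‖G p‖) * h / (1 - L1 * h) := by field_simp; ring

theorem norm_sub_anchor_le_div (hG : SymmetricL0L1Smooth L0 L1 G) (hL0 : 0 ≤ L0)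
    (hL1 : 0 ≤ L1) (y : E) {p q : E} {h : ℝ} (hpq : ‖q - p‖ ≤ h) (hh : L1 * h < 1) :
    ‖G q - G y‖ ≤ (‖G p - G y‖ + (L0 + L1 * ‖G y‖) * h) / (1 - L1 * h) := by
  have h0 : 0 ≤ h := (norm_nonneg _).trans hpq
  have hden : 0 < 1 - L1 * h := by linarith
  calc ‖G q - G y‖ ≤ ‖G q - G p‖ + ‖G p - G y‖ := norm_sub_le_norm_sub_add_norm_sub _ _ _
    _ ≤ (L0 + L1 * (‖G y‖ + ‖G p - G y‖)) * h / (1 - L1 * h) + ‖G p - G y‖ := by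
      gcongr
      exact (hG.norm_sub_le_div hL0 hL1 hpq hh).trans
        (by gcongr; exact norm_le_norm_add_norm_sub' _ _)
    _ = (‖G p - G y‖ + (L0 + L1 * ‖G y‖) * h) / (1 - L1 * h) := by field_simp; ring

theorem norm_sub_le_mul_inv_pow (hG : SymmetricL0L1Smooth L0 L1 G) (hL0 : 0 ≤ L0)
    (hL1 : 0 ≤ L1) (x y : E) {n : ℕ} (hn : L1 * ‖x - y‖ < n) :
    ‖G x - G y‖ ≤ (L0 + L1 * ‖G y‖) * ‖x - y‖ * ((1 - L1 * ‖x - y‖ / n)⁻¹) ^ n := by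
  have hn0 : (0 : ℝ) < n := (by positivity : 0 ≤ L1 * ‖x - y‖).trans_lt hn
  have hh : L1 * (‖x - y‖ / n) < 1 := by rwa [mul_div_assoc', div_lt_one hn0]
  have hc : 1 ≤ (1 - L1 * (‖x - y‖ / n))⁻¹ :=
    one_le_inv₀ (by linarith) |>.2 (by simp only [sub_le_self_iff]; positivity)
  let z : ℕ → E := fun k => AffineMap.lineMap y x ((k : ℝ) / n)
  have hz : ∀ k, ‖z (k + 1) - z k‖ ≤ ‖x - y‖ / n := fun k => by
    rw [← dist_eq_norm, dist_lineMap_lineMap, dist_comm y, dist_eq_norm, dist_eq_norm]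
    push_cast
    rw [add_div, add_sub_cancel_left, Real.norm_of_nonneg (by positivity), one_div_mul_eq_div]
  have hchain := le_nat_mul_mul_pow_of_le_mul_add (a := fun k => ‖G (z k) - G y‖)
    (B := (L0 + L1 * ‖G y‖) * (‖x - y‖ / n)) (by positivity) hc (by simp [z]) fun k =>
      (hG.norm_sub_anchor_le_div hL0 hL1 y (hz k) hh).trans_eq (by ring)
  have hzn : z n = x := by simp [z, hn0.ne']
  calc ‖G x - G y‖
      ≤ n * ((L0 + L1 * ‖G y‖) * (‖x - y‖ / n)) * (1 - L1 * (‖x - y‖ / n))⁻¹ ^ n :=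
        hzn ▸ hchain n
    _ = (L0 + L1 * ‖G y‖) * ‖x - y‖ * ((1 - L1 * ‖x - y‖ / n)⁻¹) ^ n := by
      rw [mul_div_assoc']; field_simp

theorem norm_sub_le_mul_exp (hG : SymmetricL0L1Smooth L0 L1 G) (hL0 : 0 ≤ L0) (hL1 : 0 ≤ L1)
    (x y : E) :
    ‖G x - G y‖ ≤ (L0 + L1 * ‖G y‖) * Real.exp (L1 * ‖x - y‖) * ‖x - y‖ := by
  rw [mul_right_comm]
  refine ge_of_tendsto ((Real.tendsto_inv_one_sub_div_pow_exp _).const_mul _) ?_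
  filter_upwards [eventually_gt_atTop ⌈L1 * ‖x - y‖⌉₊] with n hn
  exact hG.norm_sub_le_mul_inv_pow hL0 hL1 x y ((Nat.le_ceil _).trans_lt (by exact_mod_cast hn))

end SymmetricL0L1Smooth

theorem stmt_13_general {d : ℕ} (f : EuclideanSpace ℝ (Fin d) → ℝ) (L0 L1 : ℝ)
    (hL0 : 0 ≤ L0) (hL1 : 0 ≤ L1)
    (hsmooth : ∀ x y, ‖gradient f x - gradient f y‖
      ≤ (L0 + L1 * sSup ((fun u => ‖gradient f u‖) '' segment ℝ x y)) * ‖x - y‖) :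
    ∀ x y, ‖gradient f x - gradient f y‖
      ≤ (L0 + L1 * ‖gradient f y‖) * Real.exp (L1 * ‖x - y‖) * ‖x - y‖ :=
  SymmetricL0L1Smooth.norm_sub_le_mul_exp hsmooth hL0 hL1

theorem stmt_13 {d : ℕ} (f : EuclideanSpace ℝ (Fin d) → ℝ) (L0 L1 : ℝ)
    (hL0 : 0 ≤ L0) (hL1 : 0 ≤ L1) (hdiff : Differentiable ℝ f)
    (hsmooth : ∀ x y, ‖gradient f x - gradient f y‖
      ≤ (L0 + L1 * sSup ((fun u => ‖gradient f u‖) '' segment ℝ x y)) * ‖x - y‖) :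
    ∀ x y, ‖gradient f x - gradient f y‖
      ≤ (L0 + L1 * ‖gradient f y‖) * Real.exp (L1 * ‖x - y‖) * ‖x - y‖ :=
  stmt_13_general f L0 L1 hL0 hL1 hsmooth
end
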